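/- Geometric decay with probabilistic improvement steps: suppose a nonnegative random process (Φ_t) satisfies Φ_{t+1} ≤ Φ_t always, and whenever Φ_t > 500·OPT, P[Φ_{t+1} ≤ (1 - 1/(100k))Φ_t | Φ_t] ≥ 1/1000. Then after T = 100000·k·ln(Φ_0/(500·OPT)) steps, E[Φ_T] ≤ C·OPT for an absolute constant C (e.g., the expected number of successful steps among T is at least T/1000, and (1-1/(100k))^{T/1000}·Φ_0 ≤ 500·OPT). -/

import Mathlib

/-!
Write `δ = 1 / (100 * k)`, `p = 1 / 1000` and `B = 500 * OPT`. Conditioning on `ℱ t`, the improvement event has conditional probability at least `p` wherever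
`Φ t > B`, so a step removes at least `δ * p * (𝔼[Φ t] - B)` in expectation. Hence `𝔼[Φ t] - B`
contracts by the factor `1 - δ * p` per step, and after `T ≥ log (φ0 / B) / (δ * p)` steps
`(1 - δ * p) ^ T * φ0 ≤ B`, giving `𝔼[Φ T] ≤ 2 * B = 1000 * OPT`.
-/

open MeasureTheory

theorem le_pow_mul_sub_add_of_le_mul_add {u : ℕ → ℝ} {r B : ℝ} (hr : 0 ≤ r)
    (h : ∀ n, u (n + 1) ≤ r * u n + (1 - r) * B) (n : ℕ) :
    u n ≤ r ^ n * (u 0 - B) + B := by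
  induction n with
  | zero => simp
  | succ n ih =>
    calc u (n + 1) ≤ r * u n + (1 - r) * B := h n
      _ ≤ r * (r ^ n * (u 0 - B) + B) + (1 - r) * B := by gcongr
      _ = r ^ (n + 1) * (u 0 - B) + B := by ring

theorem one_sub_pow_mul_le_of_log_div_le {a x y : ℝ} {n : ℕ} (ha : a ≤ 1) (hy : 0 < y)
    (h : Real.log (x / y) ≤ a * n) : (1 - a) ^ n * x ≤ y := by
  rcases le_or_gt x 0 with hx | hx
  · exact (mul_nonpos_of_nonneg_of_nonpos (pow_nonneg (by linarith) n) hx).trans hy.le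
  have hpow : (1 - a) ^ n ≤ Real.exp (-(a * n)) := by
    rw [show -(a * n) = n * -a by ring, Real.exp_nat_mul]
    exact pow_le_pow_left₀ (by linarith) (by linarith [Real.add_one_le_exp (-a)]) n
  have hx_le : x ≤ y * Real.exp (a * n) := by
    rw [← div_le_iff₀' hy, ← Real.exp_log (div_pos hx hy)]
    exact Real.exp_le_exp.2 h
  calc (1 - a) ^ n * x ≤ Real.exp (-(a * n)) * (y * Real.exp (a * n)) := by gcongr
    _ = y := by rw [Real.exp_neg]; field_simp

section

variable {Ω : Type*} {m : MeasurableSpace Ω} {μ : Measure Ω}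

theorem integral_le_sub_mul_setIntegral {X Y : Ω → ℝ} {A : Set Ω} {δ : ℝ}
    (hX : Integrable X μ) (hY : Integrable Y μ) (hA : MeasurableSet A)
    (hYX : ∀ ω, Y ω ≤ X ω) (hYA : ∀ ω ∈ A, Y ω ≤ (1 - δ) * X ω) :
    ∫ ω, Y ω ∂μ ≤ ∫ ω, X ω ∂μ - δ * ∫ ω in A, X ω ∂μ := by
  have hpointwise : ∀ ω, Y ω ≤ X ω - δ * A.indicator X ω := by
    intro ω
    by_cases hω : ω ∈ A
    · rw [Set.indicator_of_mem hω]; linarith [hYA ω hω]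
    · rw [Set.indicator_of_notMem hω, mul_zero, sub_zero]; exact hYX ω
  calc ∫ ω, Y ω ∂μ ≤ ∫ ω, X ω - δ * A.indicator X ω ∂μ :=
        integral_mono hY (hX.sub ((hX.indicator hA).const_mul δ)) hpointwise
    _ = ∫ ω, X ω ∂μ - δ * ∫ ω in A, X ω ∂μ := by
        rw [integral_sub hX ((hX.indicator hA).const_mul δ), integral_const_mul,
          integral_indicator hA]

variable [IsProbabilityMeasure μ]

/-- Since `X` is `m'`-measurable, `∫ ω in A, X ω ∂μ = ∫ ω, X ω * μ[𝟙_A | m'] ω ∂μ`. -/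
theorem mul_integral_sub_le_setIntegral_of_le_condExp_indicator {m' : MeasurableSpace Ω}
    (hm : m' ≤ m) {X : Ω → ℝ} {A : Set Ω} {p B : ℝ} (hXm : StronglyMeasurable[m'] X)
    (hX : Integrable X μ) (hX0 : ∀ ω, 0 ≤ X ω) (hA : MeasurableSet[m] A) (hp : 0 ≤ p)
    (hB : 0 ≤ B) (hcond : ∀ᵐ ω ∂μ, B < X ω → p ≤ μ[A.indicator (fun _ => (1 : ℝ)) | m'] ω) :
    p * (∫ ω, X ω ∂μ - B) ≤ ∫ ω in A, X ω ∂μ := by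
  set g := A.indicator (fun _ => (1 : ℝ))
  have hg : Integrable g μ := (integrable_const 1).indicator hA
  have hXg : Integrable (X * g) μ :=
    hX.mul_bdd (stronglyMeasurable_const.indicator hA).aestronglyMeasurable (c := 1)
      (ae_of_all _ fun ω => by
        by_cases hω : ω ∈ A <;> simp [g, hω])
  have hlower : ∀ᵐ ω ∂μ, p * (X ω - B) ≤ X ω * μ[g | m'] ω := by
    filter_upwards [hcond, condExp_nonneg (m := m') (ae_of_all μ fun ω =>
      Set.indicator_nonneg (fun _ _ => zero_le_one) ω : 0 ≤ᵐ[μ] g)] with ω hω hnonneg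
    rcases le_or_gt (X ω) B with hle | hlt
    · exact (mul_nonpos_of_nonneg_of_nonpos hp (sub_nonpos.2 hle)).trans
        (mul_nonneg (hX0 ω) hnonneg)
    · nlinarith [mul_le_mul_of_nonneg_left (hω hlt) (hX0 ω)]
  have hXce : Integrable (X * μ[g | m']) μ :=
    integrable_condExp.congr (condExp_mul_of_stronglyMeasurable_left hXm hXg hg)
  calc p * (∫ ω, X ω ∂μ - B) = ∫ ω, p * (X ω - B) ∂μ := by
        rw [integral_const_mul, integral_sub hX (integrable_const B), integral_const,
          probReal_univ, one_smul]
    _ ≤ ∫ ω, X ω * μ[g | m'] ω ∂μ :=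
        integral_mono_ae ((hX.sub (integrable_const B)).const_mul p) hXce hlower
    _ = ∫ ω, μ[X * g | m'] ω ∂μ :=
        integral_congr_ae (condExp_mul_of_stronglyMeasurable_left hXm hXg hg).symm
    _ = ∫ ω in A, X ω ∂μ := by
        rw [integral_condExp hm, ← integral_indicator hA]
        congr 1 with ω
        by_cases hω : ω ∈ A <;> simp [g, hω]

theorem integral_le_pow_mul_sub_add_of_le_condExp_indicator (ℱ : Filtration ℕ m)
    {Φ : ℕ → Ω → ℝ} (hΦ : Adapted ℱ Φ) (hint : ∀ t, Integrable (Φ t) μ)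
    (hnonneg : ∀ t ω, 0 ≤ Φ t ω) (hstep : ∀ t ω, Φ (t + 1) ω ≤ Φ t ω) {δ p B : ℝ}
    (hδ : 0 ≤ δ) (hp : 0 ≤ p) (hB : 0 ≤ B) (hδp : δ * p ≤ 1)
    (hcond : ∀ t, ∀ᵐ ω ∂μ, B < Φ t ω → p ≤
      μ[{ω' | Φ (t + 1) ω' ≤ (1 - δ) * Φ t ω'}.indicator (fun _ => (1 : ℝ)) | ℱ t] ω)
    (n : ℕ) :
    ∫ ω, Φ n ω ∂μ ≤ (1 - δ * p) ^ n * (∫ ω, Φ 0 ω ∂μ - B) + B := by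
  refine le_pow_mul_sub_add_of_le_mul_add (u := fun n => ∫ ω, Φ n ω ∂μ) (by linarith)
    (fun t => ?_) n
  have hmeas : ∀ t, StronglyMeasurable[m] (Φ t) := fun t =>
    (hΦ t).stronglyMeasurable.mono (ℱ.le t)
  have hA : MeasurableSet {ω' | Φ (t + 1) ω' ≤ (1 - δ) * Φ t ω'} :=
    measurableSet_le (hmeas (t + 1)).measurable ((hmeas t).measurable.const_mul _)
  have hdrop := integral_le_sub_mul_setIntegral (hint t) (hint (t + 1)) hA (hstep t)
    fun ω hω => hω
  have hgain := mul_integral_sub_le_setIntegral_of_le_condExp_indicator (ℱ.le t)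
    (hΦ t).stronglyMeasurable (hint t) (hnonneg t) hA hp hB (hcond t)
  nlinarith [mul_le_mul_of_nonneg_left hgain hδ]

end

/-- Geometric decay with probabilistic improvement steps: there is an absolute constant `C`
such that any nonincreasing nonnegative adapted process `Φ`, starting at the constant `φ0` and
satisfying that (conditionally on the past) whenever `Φ t > 500·OPT` the next value is at most
`(1 - 1/(100k))·Φ t` with probability at least `1/1000`, has expectation at most `C·OPT`
after `T = ⌈100000·k·ln(φ0/(500·OPT))⌉` steps. -/
theorem geometric_decay_of_probabilistic_improvement :
    ∃ C : ℝ, 0 < C ∧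
      ∀ {Ω : Type} {m : MeasurableSpace Ω} (μ : Measure Ω), IsProbabilityMeasure μ →
        ∀ (k : ℕ), 1 ≤ k → ∀ (OPT : ℝ), 0 < OPT →
        ∀ (ℱ : Filtration ℕ m) (Φ : ℕ → Ω → ℝ), Adapted ℱ Φ →
        (∀ t ω, 0 ≤ Φ t ω) →
        (∀ t ω, Φ (t + 1) ω ≤ Φ t ω) →
        ∀ (φ0 : ℝ), (∀ ω, Φ 0 ω = φ0) →
        (∀ t, ∀ᵐ ω ∂μ, 500 * OPT < Φ t ω →
          (1 : ℝ) / 1000 ≤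
            (μ[Set.indicator
                {ω' | Φ (t + 1) ω' ≤ (1 - 1 / (100 * (k : ℝ))) * Φ t ω'}
                (fun _ => (1 : ℝ)) | ℱ t]) ω) →
        ∫ ω, Φ (⌈100000 * (k : ℝ) * Real.log (φ0 / (500 * OPT))⌉₊) ω ∂μ ≤ C * OPT := by
  refine ⟨1000, by norm_num, fun μ _ k hk OPT hOPT ℱ Φ hΦ hnonneg hstep φ0 hΦ0 hcond => ?_⟩
  set T := ⌈100000 * (k : ℝ) * Real.log (φ0 / (500 * OPT))⌉₊
  have hk_real : (1 : ℝ) ≤ k := by exact_mod_cast hk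
  have hbound : ∀ t ω, Φ t ω ≤ φ0 := fun t ω =>
    hΦ0 ω ▸ antitone_nat_of_succ_le (f := (Φ · ω)) (fun t => hstep t ω) (Nat.zero_le t)
  have hint : ∀ t, Integrable (Φ t) μ := fun t =>
    .of_bound ((hΦ t).stronglyMeasurable.mono (ℱ.le t)).aestronglyMeasurable φ0
      (ae_of_all _ fun ω => by rw [Real.norm_of_nonneg (hnonneg t ω)]; exact hbound t ω)
  have hrate : 1 / (100 * (k : ℝ)) * (1 / 1000) ≤ 1 := by
    rw [div_mul_div_comm, one_mul, div_le_one (by positivity)]; linarith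
  have hiter := integral_le_pow_mul_sub_add_of_le_condExp_indicator ℱ hΦ hint hnonneg hstep
    (by positivity) (by norm_num) (by positivity) hrate hcond T
  have hdecay : (1 - 1 / (100 * (k : ℝ)) * (1 / 1000)) ^ T * φ0 ≤ 500 * OPT := by
    refine one_sub_pow_mul_le_of_log_div_le hrate (by positivity) ?_
    calc Real.log (φ0 / (500 * OPT))
        = 1 / (100 * (k : ℝ)) * (1 / 1000) * (100000 * k * Real.log (φ0 / (500 * OPT))) := by
          field_simp; ring
      _ ≤ _ := by gcongr; exact Nat.le_ceil _
  have hstart : ∫ ω, Φ 0 ω ∂μ = φ0 := by simp [hΦ0]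
  rw [hstart] at hiter
  have hfactor : 0 ≤ (1 - 1 / (100 * (k : ℝ)) * (1 / 1000)) ^ T := pow_nonneg (by linarith) T
  nlinarith [mul_nonneg hfactor hOPT.le]
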